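/- arXiv:1803.02899 — 2 statements merged into one kernel-verified Lean document; each statement's English description precedes it below -/
import Mathlib

section
/- For a finite category C, the following are equivalent: (1) ζ_C has an inverse in the corner algebra e_C M(C) e_C (C has skeletal Möbius inversion); (2) there exists β in M(C) with ζ_C β = e_C; (3) there exists α in M(C) with α ζ_C = e_C; (4) there exist α, β in M(C) with α ζ_C β = e_C. -/
open CategoryTheory
open scoped Classical

universe u v

/-- Convolution product on the Möbius algebra of rational-valued functions
on pairs of objects of a finite category. -/
noncomputable def conv (C : Type u) [Category.{v} C] [Fintype C]
    (α β : C → C → ℚ) : C → C → ℚ :=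
  fun x y => ∑ z : C, α x z * β z y

/-- The size of the isomorphism class of an object. -/
noncomputable def isoCard (C : Type u) [Category.{v} C] [Fintype C] (x : C) : ℚ :=
  ((Finset.univ.filter fun z : C => Nonempty (x ≅ z)).card : ℚ)

/-- The idempotent `e_C` : `e_C(x,y) = 1/|[x]|` if `x ≅ y`, and `0` otherwise. -/
noncomputable def eFun (C : Type u) [Category.{v} C] [Fintype C] : C → C → ℚ :=
  fun x y => if Nonempty (x ≅ y) then 1 / isoCard C x else 0

/-- The zeta function of a finite category: `ζ_C(x,y) = |C(x,y)|`. -/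
noncomputable def zeta (C : Type u) [Category.{v} C] [Fintype C]
    [∀ x y : C, Fintype (x ⟶ y)] : C → C → ℚ :=
  fun x y => (Fintype.card (x ⟶ y) : ℚ)

/-- The Kronecker delta, the multiplicative identity of the Möbius algebra. -/
noncomputable def delta (C : Type u) [Category.{v} C] [Fintype C] : C → C → ℚ :=
  fun x y => if x = y then 1 else 0

/-!
Both `e_C` and `ζ_C` are constant along isomorphisms in each variable, so `e_C` is idempotent and
`ζ_C` lies in the corner ring `e_C M(C) e_C`, whose identity is `e_C`. Replacing `α, β` by
`e_C α e_C, e_C β e_C` turns (4) into an identity `a ζ_C b = 1` of the corner ring, which makes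
`ζ_C` a unit there as soon as the corner is Dedekind-finite. It inherits this from
`M(C) ≅ Mat_n(ℚ)`: for `x, y` in the corner, `(x + 1 - e)(y + 1 - e) = xy + 1 - e`.
-/

namespace IsIdempotentElem

variable {R : Type*} [Ring R] {e : R} (he : IsIdempotentElem e)
include he

lemma add_one_sub_mul_add_one_sub {x y : R} (hx : x * e = x) (hy : e * y = y) :
    (x + (1 - e)) * (y + (1 - e)) = x * y + (1 - e) := by
  simp only [mul_add, add_mul, mul_sub, sub_mul, mul_one, one_mul, hx, hy, he.eq]
  abel

instance [IsDedekindFiniteMonoid R] : IsDedekindFiniteMonoid he.Corner where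
  mul_eq_one_symm {x y} h := by
    obtain ⟨hex, hxe⟩ := (Subsemigroup.mem_corner_iff he).mp x.2
    obtain ⟨hey, hye⟩ := (Subsemigroup.mem_corner_iff he).mp y.2
    have hxy : x.1 * y.1 = e := congrArg Subtype.val h
    have hyx := mul_eq_one_symm (a := x.1 + (1 - e)) (b := y.1 + (1 - e))
      (by rw [he.add_one_sub_mul_add_one_sub hxe hey, hxy, add_sub_cancel])
    rw [he.add_one_sub_mul_add_one_sub hye hex] at hyx
    exact Subtype.ext <| show y.1 * x.1 = e by simpa using eq_sub_of_add_eq hyx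

theorem exists_inv_mem_corner_of_mul_mul_eq [IsDedekindFiniteMonoid R] {z a b : R}
    (hz : z ∈ Subsemigroup.corner e) (h : a * (z * b) = e) :
    ∃ ν ∈ Subsemigroup.corner e, z * ν = e ∧ ν * z = e := by
  let z' : he.Corner := ⟨z, hz⟩
  let a' : he.Corner := ⟨e * a * e, a, rfl⟩
  let b' : he.Corner := ⟨e * b * e, b, rfl⟩
  obtain ⟨hez, hze⟩ := (Subsemigroup.mem_corner_iff he).mp hz
  have h' : a' * (z' * b') = 1 := Subtype.ext <|
    calc e * a * e * (z * (e * b * e)) = e * (a * ((e * z * e) * b)) * e := by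
          simp only [mul_assoc]
      _ = e := by rw [hez, hze, h, he.eq, he.eq]
  obtain ⟨u, hu⟩ := isUnit_of_mul_isUnit_left (IsUnit.of_mul_eq_one_right a' h')
  refine ⟨(↑u⁻¹ : he.Corner).1, (↑u⁻¹ : he.Corner).2, ?_, ?_⟩
  · exact congrArg Subtype.val (show z' * ↑u⁻¹ = 1 by rw [← hu, Units.mul_inv])
  · exact congrArg Subtype.val (show ↑u⁻¹ * z' = 1 by rw [← hu, Units.inv_mul])

theorem tfae_exists_inv_corner [IsDedekindFiniteMonoid R] {z : R}
    (hz : z ∈ Subsemigroup.corner e) :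
    [ (∃ ν, e * (ν * e) = ν ∧ z * ν = e ∧ ν * z = e),
      (∃ b, z * b = e),
      (∃ a, a * z = e),
      (∃ a b, a * (z * b) = e) ].TFAE := by
  obtain ⟨_, hze⟩ := (Subsemigroup.mem_corner_iff he).mp hz
  tfae_have 1 → 2 | ⟨ν, _, h, _⟩ => ⟨ν, h⟩
  tfae_have 1 → 3 | ⟨ν, _, _, h⟩ => ⟨ν, h⟩
  tfae_have 2 → 4 | ⟨b, h⟩ => ⟨e, b, by rw [h, he.eq]⟩
  tfae_have 3 → 4 | ⟨a, h⟩ => ⟨a, e, by rw [hze, h]⟩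
  tfae_have 4 → 1 := by
    rintro ⟨a, b, h⟩
    obtain ⟨ν, hν, hzν, hνz⟩ := he.exists_inv_mem_corner_of_mul_mul_eq hz h
    obtain ⟨heν, hνe⟩ := (Subsemigroup.mem_corner_iff he).mp hν
    exact ⟨ν, by rw [hνe, heν], hzν, hνz⟩
  tfae_finish

end IsIdempotentElem

section MobiusAlgebra

variable (C : Type u) [Category.{v} C] [Fintype C]

lemma conv_eq_mul (α β : C → C → ℚ) : conv C α β = Matrix.of α * Matrix.of β := rfl

variable {C}

lemma isoCard_ne_zero (x : C) : isoCard C x ≠ 0 := by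
  rw [isoCard, Nat.cast_ne_zero, Finset.card_ne_zero]
  exact ⟨x, Finset.mem_filter.mpr ⟨Finset.mem_univ x, ⟨Iso.refl x⟩⟩⟩

lemma isoCard_congr {x x' : C} (i : x ≅ x') : isoCard C x = isoCard C x' := by
  unfold isoCard
  congr 2
  exact Finset.filter_congr fun z _ => ⟨fun ⟨j⟩ => ⟨i.symm ≪≫ j⟩, fun ⟨j⟩ => ⟨i ≪≫ j⟩⟩

lemma sum_ite_iso (x : C) (c : ℚ) :
    ∑ z : C, (if Nonempty (x ≅ z) then c else 0) = isoCard C x * c := by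
  rw [← Finset.sum_filter, Finset.sum_const, nsmul_eq_mul]
  rfl

lemma eFun_congr_left {x x' : C} (i : x ≅ x') (y : C) : eFun C x y = eFun C x' y := by
  have hxy : Nonempty (x ≅ y) ↔ Nonempty (x' ≅ y) :=
    ⟨fun ⟨j⟩ => ⟨i.symm ≪≫ j⟩, fun ⟨j⟩ => ⟨i ≪≫ j⟩⟩
  simp only [eFun, hxy, isoCard_congr i]

lemma eFun_mul_of_iso_invariant (f : C → C → ℚ)
    (hf : ∀ {x x' : C} (y : C), (x ≅ x') → f x y = f x' y) :
    Matrix.of (eFun C) * Matrix.of f = Matrix.of f := by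
  ext x y
  have hterm : ∀ z, eFun C x z * f z y =
      if Nonempty (x ≅ z) then f x y / isoCard C x else 0 := by
    intro z
    by_cases hz : Nonempty (x ≅ z)
    · rw [eFun, if_pos hz, if_pos hz, hf y hz.some]; ring
    · rw [eFun, if_neg hz, if_neg hz, zero_mul]
  simp only [Matrix.mul_apply, Matrix.of_apply]
  rw [Finset.sum_congr rfl fun z _ => hterm z, sum_ite_iso,
    mul_div_cancel₀ _ (isoCard_ne_zero x)]

lemma mul_eFun_of_iso_invariant (f : C → C → ℚ)
    (hf : ∀ (x : C) {y y' : C}, (y ≅ y') → f x y = f x y') :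
    Matrix.of f * Matrix.of (eFun C) = Matrix.of f := by
  ext x y
  have hterm : ∀ z, f x z * eFun C z y =
      if Nonempty (y ≅ z) then f x y / isoCard C y else 0 := by
    intro z
    by_cases hz : Nonempty (y ≅ z)
    · obtain ⟨i⟩ := hz
      rw [eFun, if_pos ⟨i.symm⟩, if_pos ⟨i⟩, hf x i, isoCard_congr i]; ring
    · rw [eFun, if_neg fun ⟨i⟩ => hz ⟨i.symm⟩, if_neg hz, mul_zero]
  simp only [Matrix.mul_apply, Matrix.of_apply]
  rw [Finset.sum_congr rfl fun z _ => hterm z, sum_ite_iso,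
    mul_div_cancel₀ _ (isoCard_ne_zero y)]

variable (C)

lemma isIdempotentElem_eFun : IsIdempotentElem (Matrix.of (eFun C)) :=
  eFun_mul_of_iso_invariant _ fun y i => eFun_congr_left i y

lemma zeta_mem_corner [∀ x y : C, Fintype (x ⟶ y)] :
    Matrix.of (zeta C) ∈ Subsemigroup.corner (Matrix.of (eFun C)) := by
  refine (Subsemigroup.mem_corner_iff (isIdempotentElem_eFun C)).mpr ⟨?_, ?_⟩
  · exact eFun_mul_of_iso_invariant _ fun y i =>
      congrArg Nat.cast (Fintype.card_congr (i.homCongr (Iso.refl y)))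
  · exact mul_eFun_of_iso_invariant _ fun x _ _ i =>
      congrArg Nat.cast (Fintype.card_congr ((Iso.refl x).homCongr i))

end MobiusAlgebra

/-- the following are equivalent for a finite category `C`:
(1) `ζ_C` is invertible in the corner algebra `e_C M(C) e_C` (skeletal Möbius
inversion); (2) `∃ β, ζ_C β = e_C`; (3) `∃ α, α ζ_C = e_C`;
(4) `∃ α β, α ζ_C β = e_C`. -/
theorem skeletal_mobius_tfae (C : Type u) [Category.{v} C] [Fintype C]
    [∀ x y : C, Fintype (x ⟶ y)] :
    [ (∃ ν : C → C → ℚ, conv C (eFun C) (conv C ν (eFun C)) = ν ∧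
        conv C (zeta C) ν = eFun C ∧ conv C ν (zeta C) = eFun C),
      (∃ β : C → C → ℚ, conv C (zeta C) β = eFun C),
      (∃ α : C → C → ℚ, conv C α (zeta C) = eFun C),
      (∃ α β : C → C → ℚ, conv C α (conv C (zeta C) β) = eFun C) ].TFAE := by
  simp only [conv_eq_mul]
  exact (isIdempotentElem_eFun C).tfae_exists_inv_corner (zeta_mem_corner C)
end

section
/- A finite category C has skeletal Möbius inversion if and only if any (equivalently, every) skeleton [C] of C has ordinary Möbius inversion, i.e., the zeta function of [C] is invertible in M([C]). -/
open CategoryTheory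
open scoped Classical

universe u v

/-!
The corner algebra `e_C M(C) e_C` consists exactly of the functions that are constant on
pairs of isomorphism classes. Such a function `ν` corresponds to the function
`μ s t = |[s]| |[t]| ν s t` on a skeleton `S`, and a sum over `C` of an isomorphism-invariant
function is the sum over `S` weighted by the sizes of the isomorphism classes. Under this
correspondence `ζ ⋆ ν = e_C` becomes `ζ|_S ⋆ μ = δ_S`, because `|[y]| e_C(x, y) = δ(x, y)`
on `S`.
-/

open Finset

section IsoInvariance

variable {C : Type u} [Category.{v} C]

def IsoInvariant (f : C → C → ℚ) : Prop :=
  ∀ ⦃x x' y y' : C⦄, Nonempty (x ≅ x') → Nonempty (y ≅ y') → f x y = f x' y'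

variable [Fintype C]

theorem zeta_isoInvariant [∀ x y : C, Fintype (x ⟶ y)] : IsoInvariant (zeta C) :=
  fun _ _ _ _ ⟨α⟩ ⟨β⟩ => congrArg (Nat.cast) (Fintype.card_congr (α.homCongr β))

theorem isoCard_eq_of_iso {x y : C} (h : Nonempty (x ≅ y)) : isoCard C x = isoCard C y := by
  obtain ⟨i⟩ := h
  unfold isoCard
  congr 2
  ext z
  simp only [mem_filter, mem_univ, true_and]
  exact ⟨fun ⟨f⟩ => ⟨i.symm ≪≫ f⟩, fun ⟨f⟩ => ⟨i ≪≫ f⟩⟩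

theorem isoCard_pos (x : C) : 0 < isoCard C x := by
  unfold isoCard
  exact_mod_cast card_pos.2 ⟨x, mem_filter.2 ⟨mem_univ x, Nonempty.intro (Iso.refl x)⟩⟩

theorem sum_isoClass (u : C) (g : C → ℚ) (hg : ∀ z, Nonempty (u ≅ z) → g z = g u) :
    ∑ z ∈ univ.filter (fun z => Nonempty (u ≅ z)), g z = isoCard C u * g u := by
  rw [sum_congr rfl fun z hz => hg z (mem_filter.1 hz).2, sum_const, nsmul_eq_mul]
  rfl

theorem eFun_isoInvariant : IsoInvariant (eFun C) := by
  intro x x' y y' ⟨α⟩ ⟨β⟩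
  unfold eFun
  rw [isoCard_eq_of_iso ⟨α⟩]
  exact if_congr ⟨fun ⟨f⟩ => ⟨α.symm ≪≫ f ≪≫ β⟩, fun ⟨f⟩ => ⟨α ≪≫ f ≪≫ β.symm⟩⟩ rfl rfl

theorem isoCard_right_mul_eFun (x y : C) :
    isoCard C y * eFun C x y = if Nonempty (x ≅ y) then 1 else 0 := by
  unfold eFun
  split_ifs with h
  · rw [isoCard_eq_of_iso h, mul_one_div_cancel (isoCard_pos y).ne']
  · rw [mul_zero]

theorem isoCard_left_mul_eFun (x y : C) :
    isoCard C x * eFun C x y = if Nonempty (x ≅ y) then 1 else 0 := by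
  unfold eFun
  split_ifs
  · rw [mul_one_div_cancel (isoCard_pos x).ne']
  · rw [mul_zero]

theorem conv_eFun_of_isoInvariant {ν : C → C → ℚ} (hν : IsoInvariant ν) :
    conv C ν (eFun C) = ν := by
  funext x y
  have hterm : ∀ z, ν x z * eFun C z y = if Nonempty (y ≅ z) then ν x y * eFun C y y else 0 := by
    intro z
    by_cases h : Nonempty (y ≅ z)
    · rw [if_pos h, hν ⟨Iso.refl x⟩ (h.map Iso.symm),
        eFun_isoInvariant (h.map Iso.symm) ⟨Iso.refl y⟩]
    · rw [if_neg h, eFun, if_neg fun ⟨f⟩ => h ⟨f.symm⟩, mul_zero]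
  rw [conv, sum_congr rfl fun z _ => hterm z, ← sum_filter, sum_const, nsmul_eq_mul]
  change isoCard C y * (ν x y * eFun C y y) = ν x y
  rw [mul_left_comm, isoCard_right_mul_eFun, if_pos ⟨Iso.refl y⟩, mul_one]

theorem eFun_conv_of_isoInvariant {ν : C → C → ℚ} (hν : IsoInvariant ν) :
    conv C (eFun C) ν = ν := by
  funext x y
  have hterm : ∀ z, eFun C x z * ν z y = if Nonempty (x ≅ z) then eFun C x x * ν x y else 0 := by
    intro z
    by_cases h : Nonempty (x ≅ z)
    · rw [if_pos h, hν (h.map Iso.symm) ⟨Iso.refl y⟩,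
        eFun_isoInvariant ⟨Iso.refl x⟩ (h.map Iso.symm)]
    · rw [if_neg h, eFun, if_neg h, zero_mul]
  rw [conv, sum_congr rfl fun z _ => hterm z, ← sum_filter, sum_const, nsmul_eq_mul]
  change isoCard C x * (eFun C x x * ν x y) = ν x y
  rw [← mul_assoc, isoCard_right_mul_eFun, if_pos ⟨Iso.refl x⟩, one_mul]

theorem eFun_conv_conv_eFun_eq_self_iff (ν : C → C → ℚ) :
    conv C (eFun C) (conv C ν (eFun C)) = ν ↔ IsoInvariant ν := by
  refine ⟨fun h x x' y y' hx hy => ?_, fun hν => ?_⟩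
  · rw [← h]
    refine sum_congr rfl fun z _ => ?_
    rw [eFun_isoInvariant hx ⟨Iso.refl z⟩]
    congr 1
    exact sum_congr rfl fun w _ => by rw [eFun_isoInvariant ⟨Iso.refl w⟩ hy]
  · rw [conv_eFun_of_isoInvariant hν, eFun_conv_of_isoInvariant hν]

end IsoInvariance

section Skeleton

variable {C : Type u} [Category.{v} C] {S : Set C}
  (hS : ∀ x : C, ∃! s : C, s ∈ S ∧ Nonempty (x ≅ s))

noncomputable def skeletonRep (x : C) : C := (hS x).choose

include hS in
theorem skeletonRep_mem (x : C) : skeletonRep hS x ∈ S := (hS x).choose_spec.1.1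

theorem iso_skeletonRep (x : C) : Nonempty (x ≅ skeletonRep hS x) := (hS x).choose_spec.1.2

theorem eq_skeletonRep_of_iso {x s : C} (hs : s ∈ S) (h : Nonempty (x ≅ s)) :
    s = skeletonRep hS x :=
  (hS x).choose_spec.2 s ⟨hs, h⟩

theorem skeletonRep_of_mem {s : C} (hs : s ∈ S) : skeletonRep hS s = s :=
  (eq_skeletonRep_of_iso hS hs ⟨Iso.refl s⟩).symm

theorem skeletonRep_eq_iff {x y : C} : skeletonRep hS x = skeletonRep hS y ↔ Nonempty (x ≅ y) :=
  ⟨fun h => ⟨(iso_skeletonRep hS x).some ≪≫ eqToIso h ≪≫ (iso_skeletonRep hS y).some.symm⟩,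
    fun ⟨f⟩ => (eq_skeletonRep_of_iso hS (skeletonRep_mem hS y)
      ⟨f ≪≫ (iso_skeletonRep hS y).some⟩).symm⟩

theorem skeletonRep_eq_iff_of_mem {x s : C} (hs : s ∈ S) :
    skeletonRep hS x = s ↔ Nonempty (x ≅ s) := by
  rw [← skeletonRep_eq_iff hS, skeletonRep_of_mem hS hs]

include hS in
theorem nonempty_iso_iff_eq_of_mem {s t : C} (hs : s ∈ S) (ht : t ∈ S) :
    Nonempty (s ≅ t) ↔ s = t := by
  rw [← skeletonRep_eq_iff_of_mem hS ht, skeletonRep_of_mem hS hs]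

variable [Fintype C]

include hS in
theorem sum_eq_sum_skeleton (g : C → ℚ) (hg : ∀ ⦃x y⦄, Nonempty (x ≅ y) → g x = g y) :
    ∑ z, g z = ∑ u ∈ univ.filter (· ∈ S), isoCard C u * g u := by
  rw [← sum_fiberwise_of_maps_to (g := skeletonRep hS)
    fun x _ => mem_filter.2 ⟨mem_univ _, skeletonRep_mem hS x⟩]
  refine sum_congr rfl fun u hu => ?_
  have hfiber : univ.filter (fun z => skeletonRep hS z = u) =
      univ.filter (fun z => Nonempty (u ≅ z)) := by
    ext z
    simp only [mem_filter, mem_univ, true_and, skeletonRep_eq_iff_of_mem hS (mem_filter.1 hu).2]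
    exact ⟨Nonempty.map Iso.symm, Nonempty.map Iso.symm⟩
  rw [hfiber, sum_isoClass u g fun z hz => (hg hz).symm]

variable {ζ ν : C → C → ℚ}

include hS in
theorem sum_skeleton_mul_weighted (hζ : IsoInvariant ζ) (hν : IsoInvariant ν) (x y : C) :
    ∑ z ∈ univ.filter (· ∈ S), ζ x z * (isoCard C z * isoCard C y * ν z y) =
      isoCard C y * conv C ζ ν x y := by
  rw [conv, sum_eq_sum_skeleton hS _ fun a b h => by rw [hζ ⟨Iso.refl x⟩ h, hν h ⟨Iso.refl y⟩],
    mul_sum]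
  exact sum_congr rfl fun z _ => by ring

include hS in
theorem sum_skeleton_weighted_mul (hζ : IsoInvariant ζ) (hν : IsoInvariant ν) (x y : C) :
    ∑ z ∈ univ.filter (· ∈ S), isoCard C x * isoCard C z * ν x z * ζ z y =
      isoCard C x * conv C ν ζ x y := by
  rw [conv, sum_eq_sum_skeleton hS _ fun a b h => by rw [hζ h ⟨Iso.refl y⟩, hν ⟨Iso.refl x⟩ h],
    mul_sum]
  exact sum_congr rfl fun z _ => by ring

noncomputable def cornerOfSkeleton (μ : C → C → ℚ) (x y : C) : ℚ :=
  μ (skeletonRep hS x) (skeletonRep hS y) / (isoCard C x * isoCard C y)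

theorem cornerOfSkeleton_isoInvariant (μ : C → C → ℚ) : IsoInvariant (cornerOfSkeleton hS μ) :=
  fun _ _ _ _ hx hy => by
    rw [cornerOfSkeleton, cornerOfSkeleton, (skeletonRep_eq_iff hS).2 hx,
      (skeletonRep_eq_iff hS).2 hy, isoCard_eq_of_iso hx, isoCard_eq_of_iso hy]

theorem isoCard_mul_isoCard_mul_cornerOfSkeleton (μ : C → C → ℚ) (x y : C) :
    isoCard C x * isoCard C y * cornerOfSkeleton hS μ x y =
      μ (skeletonRep hS x) (skeletonRep hS y) :=
  mul_div_cancel₀ _ (mul_pos (isoCard_pos x) (isoCard_pos y)).ne'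

include hS in
theorem conv_cornerOfSkeleton_eq_eFun {μ : C → C → ℚ} (hζ : IsoInvariant ζ)
    (hμ : ∀ x ∈ S, ∀ y ∈ S,
      ∑ z ∈ univ.filter (· ∈ S), ζ x z * μ z y = if x = y then 1 else 0) :
    conv C ζ (cornerOfSkeleton hS μ) = eFun C := by
  funext x y
  apply mul_left_cancel₀ (isoCard_pos y).ne'
  rw [← sum_skeleton_mul_weighted hS hζ (cornerOfSkeleton_isoInvariant hS μ),
    isoCard_right_mul_eFun, ← skeletonRep_eq_iff hS,
    ← hμ _ (skeletonRep_mem hS x) _ (skeletonRep_mem hS y)]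
  refine sum_congr rfl fun z hz => ?_
  rw [isoCard_mul_isoCard_mul_cornerOfSkeleton, skeletonRep_of_mem hS (mem_filter.1 hz).2,
    hζ (iso_skeletonRep hS x) ⟨Iso.refl z⟩]

include hS in
theorem cornerOfSkeleton_conv_eq_eFun {μ : C → C → ℚ} (hζ : IsoInvariant ζ)
    (hμ : ∀ x ∈ S, ∀ y ∈ S,
      ∑ z ∈ univ.filter (· ∈ S), μ x z * ζ z y = if x = y then 1 else 0) :
    conv C (cornerOfSkeleton hS μ) ζ = eFun C := by
  funext x y
  apply mul_left_cancel₀ (isoCard_pos x).ne'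
  rw [← sum_skeleton_weighted_mul hS hζ (cornerOfSkeleton_isoInvariant hS μ),
    isoCard_left_mul_eFun, ← skeletonRep_eq_iff hS,
    ← hμ _ (skeletonRep_mem hS x) _ (skeletonRep_mem hS y)]
  refine sum_congr rfl fun z hz => ?_
  rw [isoCard_mul_isoCard_mul_cornerOfSkeleton, skeletonRep_of_mem hS (mem_filter.1 hz).2,
    hζ ⟨Iso.refl z⟩ (iso_skeletonRep hS y)]

end Skeleton

/-- a finite category `C` has skeletal Möbius inversion iff any
(equivalently, every) skeleton `[C]` of `C` (a full subcategory containing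
exactly one object from each isomorphism class, here given by its set `S` of
objects) has ordinary Möbius inversion, i.e. the zeta function of the full
subcategory on `S` is invertible in `M([C])`. -/
theorem skeletal_mobius_iff_skeleton_mobius (C : Type u) [Category.{v} C] [Fintype C]
    [∀ x y : C, Fintype (x ⟶ y)] (S : Set C)
    (hS : ∀ x : C, ∃! s : C, s ∈ S ∧ Nonempty (x ≅ s)) :
    (∃ ν : C → C → ℚ, conv C (eFun C) (conv C ν (eFun C)) = ν ∧
        conv C (zeta C) ν = eFun C ∧ conv C ν (zeta C) = eFun C) ↔
    (∃ μ : C → C → ℚ,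
      (∀ x ∈ S, ∀ y ∈ S,
        ∑ z ∈ Finset.univ.filter (· ∈ S), zeta C x z * μ z y = if x = y then 1 else 0) ∧
      (∀ x ∈ S, ∀ y ∈ S,
        ∑ z ∈ Finset.univ.filter (· ∈ S), μ x z * zeta C z y = if x = y then 1 else 0)) := by
  constructor
  · rintro ⟨ν, hcorner, hleft, hright⟩
    have hν := (eFun_conv_conv_eFun_eq_self_iff ν).1 hcorner
    refine ⟨fun s t => isoCard C s * isoCard C t * ν s t, fun x hx y hy => ?_, fun x hx y hy => ?_⟩
    · rw [sum_skeleton_mul_weighted hS zeta_isoInvariant hν, hleft, isoCard_right_mul_eFun,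
        nonempty_iso_iff_eq_of_mem hS hx hy]
    · rw [sum_skeleton_weighted_mul hS zeta_isoInvariant hν, hright, isoCard_left_mul_eFun,
        nonempty_iso_iff_eq_of_mem hS hx hy]
  · rintro ⟨μ, hleft, hright⟩
    exact ⟨cornerOfSkeleton hS μ,
      (eFun_conv_conv_eFun_eq_self_iff _).2 (cornerOfSkeleton_isoInvariant hS μ),
      conv_cornerOfSkeleton_eq_eFun hS zeta_isoInvariant hleft,
      cornerOfSkeleton_conv_eq_eFun hS zeta_isoInvariant hright⟩
end
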